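/- arXiv:1807.01896 — 7 statements merged into one kernel-verified Lean document; each statement's English description precedes it below -/
import Mathlib

section
/- If {a, b, c} is a Diophantine triple in the ring of integers O_K of an imaginary quadratic field (i.e., a, b, c are distinct, each pairwise product plus one is a square in O_K) and abc ≠ 0, then none of ab, ac, bc is a square in K. -/
/-!
Write `N x = |f x|²`, an integer on `𝓞 K`. If `ab = w²`, then `w` is integral and
`(r - w)(r + w) = 1`, so `r ± w` have norm one; the parallelogram law gives `N r + N w = 1`,
hence `r = 0` and `w² = ab = -1`. With `i = w` in the ring, `2 f x` is a Gaussian integer for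
every `x`, so the unit `a` is `±1` or `±i`, and `a ≠ b = -a⁻¹` leaves `b = -a`. Then
`s² + t² = 2`; the norms of `s ± i t` multiply to `N 2 = 4` and add up to `2 (N s + N t)`, which
forces `N s + N t = 2` and then `s² = 1`, i.e. `ac = 0`.
-/

open NumberField Complex ComplexConjugate

theorem Int.eq_zero_or_eq_zero_of_sq_add_sq_eq_four {m n : ℤ} (h : m ^ 2 + n ^ 2 = 4) :
    m = 0 ∨ n = 0 := by
  obtain ⟨hm1, hm2⟩ : -2 ≤ m ∧ m ≤ 2 := ⟨by nlinarith, by nlinarith⟩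
  obtain ⟨hn1, hn2⟩ : -2 ≤ n ∧ n ≤ 2 := ⟨by nlinarith, by nlinarith⟩
  interval_cases m <;> interval_cases n <;> omega

theorem Int.sq_eq_four_of_sq_add_sq_eq_eight {m n : ℤ} (h : m ^ 2 + n ^ 2 = 8) : m ^ 2 = 4 := by
  obtain ⟨hm1, hm2⟩ : -2 ≤ m ∧ m ≤ 2 := ⟨by nlinarith, by nlinarith⟩
  obtain ⟨hn1, hn2⟩ : -2 ≤ n ∧ n ≤ 2 := ⟨by nlinarith, by nlinarith⟩
  interval_cases m <;> interval_cases n <;> omega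

theorem Int.add_eq_four_of_mul_eq_four {a b : ℤ} (ha : 0 ≤ a) (hb : 0 ≤ b) (h : a * b = 4)
    (heven : Even (a + b)) : a + b = 4 := by
  have hb1 : 1 ≤ b := by
    rcases hb.eq_or_lt with rfl | hb
    · simp at h
    · exact hb
  have : a ≤ 4 := by nlinarith
  obtain ⟨k, hk⟩ := heven
  interval_cases a <;> omega

/-- In the application `F` is a complex embedding of an imaginary quadratic field and `N` its
field norm. -/
def IsIntNormSq {R : Type*} [CommRing R] (F : R →+* ℂ) (N : R → ℤ) : Prop :=
  ∀ x, (N x : ℝ) = normSq (F x)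

namespace IsIntNormSq

variable {R : Type*} [CommRing R] {F : R →+* ℂ} {N : R → ℤ}

theorem map_mul (hN : IsIntNormSq F N) (x y : R) : N (x * y) = N x * N y := by
  have : (N (x * y) : ℝ) = N x * N y := by rw [hN, hN, hN, _root_.map_mul, normSq_mul]
  exact_mod_cast this

theorem map_one (hN : IsIntNormSq F N) : N 1 = 1 := by
  have : (N 1 : ℝ) = 1 := by rw [hN, _root_.map_one, normSq_one]
  exact_mod_cast this

theorem nonneg (hN : IsIntNormSq F N) (x : R) : 0 ≤ N x := by
  have : (0 : ℝ) ≤ N x := hN x ▸ normSq_nonneg _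
  exact_mod_cast this

theorem pos (hN : IsIntNormSq F N) (hF : Function.Injective F) {x : R} (hx : x ≠ 0) :
    0 < N x := by
  have : (0 : ℝ) < N x := hN x ▸ normSq_pos.mpr ((map_ne_zero_iff F hF).mpr hx)
  exact_mod_cast this

theorem eq_one_of_mul_eq_one (hN : IsIntNormSq F N) {x y : R} (h : x * y = 1) : N x = 1 :=
  Int.eq_one_of_mul_eq_one_right (hN.nonneg x) (by rw [← hN.map_mul, h, hN.map_one])

theorem map_add_add_map_sub (hN : IsIntNormSq F N) (x y : R) :
    N (x + y) + N (x - y) = 2 * (N x + N y) := by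
  have : (N (x + y) + N (x - y) : ℝ) = 2 * (N x + N y) := by
    rw [hN, hN, hN, hN, map_add, map_sub, normSq_add, normSq_sub]
    ring
  exact_mod_cast this

theorem exists_intCast_eq_two_mul_re (hN : IsIntNormSq F N) (x : R) :
    ∃ m : ℤ, (m : ℝ) = 2 * (F x).re := by
  refine ⟨N (x + 1) - N x - 1, ?_⟩
  push_cast
  rw [hN, hN, map_add, _root_.map_one, normSq_add]
  simp only [_root_.map_one, mul_one]
  ring

theorem exists_two_mul_eq_mk (hN : IsIntNormSq F N) {ω : R} (hω : ω * ω = -1) (x : R) :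
    ∃ m n : ℤ, 2 * F x = ⟨m, n⟩ := by
  obtain ⟨m, hm⟩ := hN.exists_intCast_eq_two_mul_re x
  obtain ⟨k, hk⟩ := hN.exists_intCast_eq_two_mul_re (ω * x)
  have hωI : (F ω - I) * (F ω + I) = 0 := by
    have hFω := congrArg F hω
    rw [_root_.map_mul, map_neg, _root_.map_one] at hFω
    linear_combination hFω - I_sq
  rw [_root_.map_mul] at hk
  rcases mul_eq_zero.mp hωI with h | h
  · refine ⟨m, -k, ?_⟩
    rw [eq_of_sub_eq_zero h] at hk
    apply Complex.ext <;> simp [hm, hk]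
  · refine ⟨m, k, ?_⟩
    rw [eq_neg_of_add_eq_zero_left h] at hk
    apply Complex.ext <;> simp [hm, hk]

theorem eq_zero_of_mul_self_add_one_eq_mul_self (hN : IsIntNormSq F N)
    (hF : Function.Injective F) {y r : R} (hy : y ≠ 0) (h : y * y + 1 = r * r) : r = 0 := by
  have hunit : (r + y) * (r - y) = 1 := by linear_combination -h
  have hsum := hN.map_add_add_map_sub r y
  rw [hN.eq_one_of_mul_eq_one hunit, hN.eq_one_of_mul_eq_one ((mul_comm _ _).trans hunit)]
    at hsum
  have hr : N r = 0 := by linarith [hN.nonneg r, hN.pos hF hy]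
  by_contra hr0
  exact (hN.pos hF hr0).ne' hr

theorem four_mul_eq_sq_add_sq (hN : IsIntNormSq F N) {x : R} {m n : ℤ}
    (hx : 2 * F x = ⟨m, n⟩) : 4 * N x = m ^ 2 + n ^ 2 := by
  have : (4 * N x : ℝ) = m ^ 2 + n ^ 2 := by
    rw [hN, show (4 : ℝ) = normSq 2 by norm_num [normSq_apply], ← normSq_mul, hx, normSq_mk]
    ring
  exact_mod_cast this

theorem four_mul_map_mul_self {x : R} {m n : ℤ} (hx : 2 * F x = ⟨m, n⟩) :
    4 * F (x * x) = ⟨m ^ 2 - n ^ 2, 2 * m * n⟩ := by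
  rw [_root_.map_mul, show 4 * (F x * F x) = (2 * F x) * (2 * F x) by ring, hx]
  apply Complex.ext <;> simp <;> ring

theorem mul_self_eq_one_or_neg_one (hN : IsIntNormSq F N) (hF : Function.Injective F)
    {ω : R} (hω : ω * ω = -1) {a b : R} (h : a * b = 1) : a * a = 1 ∨ a * a = -1 := by
  obtain ⟨m, n, hmn⟩ := hN.exists_two_mul_eq_mk hω a
  have hsq := four_mul_map_mul_self hmn
  have hnorm := hN.four_mul_eq_sq_add_sq hmn
  rw [hN.eq_one_of_mul_eq_one h] at hnorm
  rcases Int.eq_zero_or_eq_zero_of_sq_add_sq_eq_four hnorm.symm with rfl | rfl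
  · right
    apply hF
    have hn : (n : ℝ) ^ 2 = 4 := by exact_mod_cast (by linarith : n ^ 2 = 4)
    rw [map_neg, _root_.map_one]
    linear_combination (hsq.trans (Complex.ext (by simp [hn]) (by simp) : _ = (-4 : ℂ))) / 4
  · left
    apply hF
    have hm : (m : ℝ) ^ 2 = 4 := by exact_mod_cast (by linarith : m ^ 2 = 4)
    rw [_root_.map_one]
    linear_combination (hsq.trans (Complex.ext (by simp [hm]) (by simp) : _ = (4 : ℂ))) / 4

theorem add_eq_two_of_mul_self_add_mul_self_eq_two (hN : IsIntNormSq F N) {ω : R}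
    (hω : ω * ω = -1) {s t : R} (h : s * s + t * t = 2) : N s + N t = 2 := by
  have hNω : N ω = 1 := hN.eq_one_of_mul_eq_one (show ω * -ω = 1 by linear_combination -hω)
  have hN2 : N 2 = 4 := by
    have : (N 2 : ℝ) = 4 := by rw [hN, map_ofNat]; norm_num [normSq_apply]
    exact_mod_cast this
  have hprod : N (s + ω * t) * N (s - ω * t) = 4 := by
    rw [← hN.map_mul, ← hN2]
    congr 1
    linear_combination h - t * t * hω
  have hsum := hN.map_add_add_map_sub s (ω * t)
  rw [hN.map_mul, hNω, one_mul] at hsum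
  have := Int.add_eq_four_of_mul_eq_four (hN.nonneg _) (hN.nonneg _) hprod
    ⟨N s + N t, by linarith⟩
  linarith

theorem mul_self_eq_one_of_add_eq_two (hN : IsIntNormSq F N) (hF : Function.Injective F)
    {ω : R} (hω : ω * ω = -1) {s t : R} (h : s * s + t * t = 2) : s * s = 1 := by
  have hst := hN.add_eq_two_of_mul_self_add_mul_self_eq_two hω h
  obtain ⟨m, n, hs⟩ := hN.exists_two_mul_eq_mk hω s
  obtain ⟨m', n', ht⟩ := hN.exists_two_mul_eq_mk hω t
  have hre : m ^ 2 - n ^ 2 + (m' ^ 2 - n' ^ 2) = 8 := by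
    have h8 : (4 * F (s * s) + 4 * F (t * t)).re = 8 := by
      rw [← mul_add, ← map_add, h, map_ofNat]
      norm_num
    rw [four_mul_map_mul_self hs, four_mul_map_mul_self ht, add_re] at h8
    dsimp only at h8
    exact_mod_cast h8
  have h4s := hN.four_mul_eq_sq_add_sq hs
  have h4t := hN.four_mul_eq_sq_add_sq ht
  have hn : n = 0 := by nlinarith [sq_nonneg n', sq_nonneg n]
  have hm : m ^ 2 = 4 := Int.sq_eq_four_of_sq_add_sq_eq_eight (n := m') (by linarith)
  have hm' : (m : ℝ) ^ 2 = 4 := by exact_mod_cast hm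
  apply hF
  rw [_root_.map_one]
  have hss := four_mul_map_mul_self hs
  rw [hn] at hss
  linear_combination (hss.trans (Complex.ext (by simp [hm']) (by simp) : _ = (4 : ℂ))) / 4

theorem not_isSquare_mul (hN : IsIntNormSq F N) (hF : Function.Injective F) {a b c : R}
    (hab : a ≠ b) (habc : a * b * c ≠ 0) (hr : ∃ r, a * b + 1 = r ^ 2)
    (hs : ∃ s, a * c + 1 = s ^ 2) (ht : ∃ t, b * c + 1 = t ^ 2) : ¬ IsSquare (a * b) := by
  rintro ⟨ω, hω⟩
  obtain ⟨r, hr⟩ := hr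
  obtain ⟨s, hs⟩ := hs
  obtain ⟨t, ht⟩ := ht
  have hω0 : ω ≠ 0 := by
    rintro rfl
    exact habc (by rw [hω]; ring)
  have hr0 : r = 0 := hN.eq_zero_of_mul_self_add_one_eq_mul_self hF hω0 (by rw [← hω, hr, sq])
  have hab1 : a * b = -1 := by linear_combination hr + r * hr0
  have hωω : ω * ω = -1 := hω.symm.trans hab1
  have ha : a * a = 1 := by
    rcases hN.mul_self_eq_one_or_neg_one hF hωω (a := a) (b := -b) (by linear_combination -hab1)
      with ha | ha
    · exact ha
    · exact absurd (by linear_combination -b * ha + a * hab1) hab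
  have hb : b = -a := by linear_combination -b * ha + a * hab1
  have hst : s * s + t * t = 2 := by linear_combination -hs - ht + c * hb
  have hs1 := hN.mul_self_eq_one_of_add_eq_two hF hωω hst
  apply habc
  rw [show c = 0 by linear_combination -c * ha + a * hs + a * hs1, mul_zero]

end IsIntNormSq

theorem algebraMap_norm_eq_mul_conj {K : Type*} [Field K] [NumberField K]
    (hdeg : Module.finrank ℚ K = 2) {f : K →+* ℂ} (hf : ¬ ComplexEmbedding.IsReal f)
    (x : K) : algebraMap ℚ ℂ (Algebra.norm ℚ x) = f x * conj (f x) := by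
  classical
  have hne : f ≠ ComplexEmbedding.conjugate f :=
    fun h => hf (ComplexEmbedding.isReal_iff.mpr h.symm)
  have huniv : (Finset.univ : Finset (K →+* ℂ)) = {f, ComplexEmbedding.conjugate f} := by
    refine (Finset.eq_univ_of_card _ ?_).symm
    rw [Finset.card_pair hne, NumberField.Embeddings.card K ℂ, hdeg]
  rw [Algebra.norm_eq_prod_embeddings ℚ ℂ x,
    ← (RingHom.equivRatAlgHom K ℂ).prod_comp (fun σ => σ x)]
  simp [huniv, Finset.prod_pair hne]

theorem IsIntegrallyClosed.isSquare_of_algebraMap_eq_sq {R K : Type*} [CommRing R] [Field K]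
    [Algebra R K] [IsFractionRing R K] [IsIntegrallyClosed R] {x : R} {w : K}
    (h : algebraMap R K x = w ^ 2) : IsSquare x := by
  obtain ⟨y, rfl⟩ := IsIntegrallyClosed.exists_algebraMap_eq_of_isIntegral_pow (R := R) two_pos
    (by rw [← h]; exact isIntegral_algebraMap)
  exact ⟨y, IsFractionRing.injective R K (by rw [map_mul, ← sq]; exact h)⟩

theorem isIntNormSq_norm {K : Type*} [Field K] [NumberField K]
    (hdeg : Module.finrank ℚ K = 2) {f : K →+* ℂ} (hf : ¬ ComplexEmbedding.IsReal f) :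
    IsIntNormSq (f.comp (algebraMap (𝓞 K) K)) (Algebra.norm ℤ) := fun x => by
  have h := algebraMap_norm_eq_mul_conj hdeg hf x
  rw [← Algebra.coe_norm_int, mul_conj, eq_ratCast] at h
  exact_mod_cast h

theorem not_exists_coe_mul_eq_sq {K : Type*} [Field K] [NumberField K]
    (hdeg : Module.finrank ℚ K = 2) {f : K →+* ℂ} (hf : ¬ ComplexEmbedding.IsReal f)
    {a b c : 𝓞 K} (hab : a ≠ b) (habc : a * b * c ≠ 0) (hr : ∃ r, a * b + 1 = r ^ 2)
    (hs : ∃ s, a * c + 1 = s ^ 2) (ht : ∃ t, b * c + 1 = t ^ 2) :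
    ¬ ∃ w : K, (a : K) * b = w ^ 2 := fun ⟨_, hw⟩ =>
  (isIntNormSq_norm hdeg hf).not_isSquare_mul
    (f.injective.comp (FaithfulSMul.algebraMap_injective _ _)) hab habc hr hs ht
    (IsIntegrallyClosed.isSquare_of_algebraMap_eq_sq (by push_cast; exact hw))

/-- If `{a, b, c}` is a Diophantine triple in `𝓞 K`, `K` imaginary quadratic, with
`abc ≠ 0`, then none of `ab`, `ac`, `bc` is a square in `K`. -/
theorem stmt_1 (K : Type*) [Field K] [NumberField K]
    (hdeg : Module.finrank ℚ K = 2)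
    (f : K →+* ℂ) (him : ∃ w : K, (f w).im ≠ 0)
    (a b c : 𝓞 K) (hab : a ≠ b) (hac : a ≠ c) (hbc : b ≠ c)
    (hab1 : ∃ r : 𝓞 K, a * b + 1 = r ^ 2)
    (hac1 : ∃ s : 𝓞 K, a * c + 1 = s ^ 2)
    (hbc1 : ∃ t : 𝓞 K, b * c + 1 = t ^ 2)
    (habc : a * b * c ≠ 0) :
    (¬ ∃ w : K, ((a : K) * b = w ^ 2)) ∧
    (¬ ∃ w : K, ((a : K) * c = w ^ 2)) ∧
    (¬ ∃ w : K, ((b : K) * c = w ^ 2)) := by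
  have hf : ¬ ComplexEmbedding.IsReal f := fun h =>
    him.elim fun w hw => hw (conj_eq_iff_im.mp (RingHom.congr_fun h w))
  refine ⟨not_exists_coe_mul_eq_sq hdeg hf hab habc hab1 hac1 hbc1,
    not_exists_coe_mul_eq_sq hdeg hf (c := b) hac ?_ hac1 hab1 ?_,
    not_exists_coe_mul_eq_sq hdeg hf (c := a) hbc ?_ hbc1 ?_ ?_⟩
  · rwa [mul_right_comm]
  · simpa only [mul_comm c b] using hbc1
  · rwa [mul_comm, ← mul_assoc]
  · simpa only [mul_comm b a] using hab1
  · simpa only [mul_comm c a] using hac1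
end

section
/- Let a, c ∈ O_K with ac + 1 = s^2 and suppose |ac| ≥ 16 and |c| > 4|a| (complex absolute values). If (x, z) ∈ O_K × O_K satisfies a z^2 - c x^2 = a - c with z ≠ 0, then for an appropriate choice of sign ε ∈ {1, -1}, |ε (s/a)√(a/c) − (s x)/(a z)| ≤ (|s|·|c−a|)/(|a|·√(|a c|)) · 1/|z|^2, where √(a/c) denotes a fixed complex square root. -/
open NumberField

/-- Since `(w - t) + (w + t) = 2w`, the smaller of `‖w - t‖` and `‖w + t‖` is paired with a
factor of norm at least `‖w‖` in `w² - t² = (w - t)(w + t)`. -/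
theorem RCLike.exists_sign_norm_sub_mul_le {𝕜 : Type*} [RCLike 𝕜] (w t : 𝕜) :
    ∃ ε : 𝕜, (ε = 1 ∨ ε = -1) ∧ ‖ε * w - t‖ * ‖w‖ ≤ ‖w ^ 2 - t ^ 2‖ := by
  have hsum : 2 * ‖w‖ ≤ ‖w - t‖ + ‖w + t‖ := by
    calc 2 * ‖w‖ = ‖(w - t) + (w + t)‖ := by
          rw [show (w - t) + (w + t) = 2 * w by ring, norm_mul, RCLike.norm_two]
      _ ≤ ‖w - t‖ + ‖w + t‖ := norm_add_le _ _
  have hfactor : ‖w ^ 2 - t ^ 2‖ = ‖w - t‖ * ‖w + t‖ := by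
    rw [show w ^ 2 - t ^ 2 = (w - t) * (w + t) by ring, norm_mul]
  rcases le_total ‖w - t‖ ‖w + t‖ with h | h
  · refine ⟨1, Or.inl rfl, ?_⟩
    rw [one_mul, hfactor]
    exact mul_le_mul_of_nonneg_left (by linarith) (norm_nonneg _)
  · refine ⟨-1, Or.inr rfl, ?_⟩
    rw [show -1 * w - t = -(w + t) by ring, norm_neg, hfactor, mul_comm ‖w - t‖]
    exact mul_le_mul_of_nonneg_left (by linarith) (norm_nonneg _)

theorem RCLike.norm_mul_norm_eq_sqrt_of_sq_eq_div {𝕜 : Type*} [RCLike 𝕜] {a c w : 𝕜}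
    (hw : w ^ 2 = a / c) (hc : c ≠ 0) : ‖w‖ * ‖c‖ = √‖a * c‖ := by
  have hsq : ‖a * c‖ = (‖w‖ * ‖c‖) ^ 2 := by
    rw [mul_pow, ← norm_pow, hw, norm_mul, norm_div]
    field_simp [norm_ne_zero_iff.mpr hc]
  rw [hsq, Real.sqrt_sq (by positivity)]

theorem RCLike.exists_sign_norm_sub_div_mul_sqrt_le {𝕜 : Type*} [RCLike 𝕜] {a c w x z : 𝕜}
    (hac : a * c ≠ 0) (hz : z ≠ 0) (hsol : a * z ^ 2 - c * x ^ 2 = a - c)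
    (hw : w ^ 2 = a / c) :
    ∃ ε : 𝕜, (ε = 1 ∨ ε = -1) ∧ ‖ε * w - x / z‖ * √‖a * c‖ ≤ ‖c - a‖ / ‖z‖ ^ 2 := by
  have hc : c ≠ 0 := right_ne_zero_of_mul hac
  have hdiff : w ^ 2 - (x / z) ^ 2 = (a - c) / (c * z ^ 2) := by
    rw [hw, ← hsol]
    field_simp
  obtain ⟨ε, hε, hbound⟩ := exists_sign_norm_sub_mul_le w (x / z)
  refine ⟨ε, hε, ?_⟩
  calc ‖ε * w - x / z‖ * √‖a * c‖ = ‖ε * w - x / z‖ * ‖w‖ * ‖c‖ := by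
        rw [mul_assoc, norm_mul_norm_eq_sqrt_of_sq_eq_div hw hc]
    _ ≤ ‖w ^ 2 - (x / z) ^ 2‖ * ‖c‖ := by gcongr
    _ = ‖c - a‖ / ‖z‖ ^ 2 := by
        rw [hdiff, norm_div, norm_mul, norm_pow, norm_sub_rev]
        field_simp [norm_ne_zero_iff.mpr hc]

theorem RCLike.exists_sign_norm_mul_sub_div_le {𝕜 : Type*} [RCLike 𝕜] {a c w x z : 𝕜}
    (s : 𝕜) (hac : a * c ≠ 0) (hz : z ≠ 0) (hsol : a * z ^ 2 - c * x ^ 2 = a - c)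
    (hw : w ^ 2 = a / c) :
    ∃ ε : 𝕜, (ε = 1 ∨ ε = -1) ∧
      ‖ε * (s / a) * w - s * x / (a * z)‖
        ≤ ‖s‖ * ‖c - a‖ / (‖a‖ * √‖a * c‖) * (1 / ‖z‖ ^ 2) := by
  have hsqrt : 0 < √‖a * c‖ := Real.sqrt_pos.mpr (norm_pos_iff.mpr hac)
  obtain ⟨ε, hε, hbound⟩ := exists_sign_norm_sub_div_mul_sqrt_le hac hz hsol hw
  refine ⟨ε, hε, ?_⟩
  rw [show ε * (s / a) * w - s * x / (a * z) = s / a * (ε * w - x / z) by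
    field_simp [left_ne_zero_of_mul hac], norm_mul, norm_div]
  calc ‖s‖ / ‖a‖ * ‖ε * w - x / z‖ ≤ ‖s‖ / ‖a‖ * (‖c - a‖ / ‖z‖ ^ 2 / √‖a * c‖) := by
        gcongr
        exact (le_div_iff₀ hsqrt).mpr hbound
    _ = _ := by ring

theorem stmt_3_general (K : Type*) [Field K]
    (f : K →+* ℂ)
    (a c s : 𝓞 K)
    (hac : 16 ≤ ‖f ((a : K) * c)‖)
    (x z : 𝓞 K) (hsol : a * z ^ 2 - c * x ^ 2 = a - c) (hz : z ≠ 0)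
    (w : ℂ) (hw : w ^ 2 = f (a : K) / f (c : K)) :
    ∃ ε : ℂ, (ε = 1 ∨ ε = -1) ∧
      ‖ε * (f (s : K) / f (a : K)) * w
          - f (s : K) * f (x : K) / (f (a : K) * f (z : K))‖
        ≤ ‖f (s : K)‖ * ‖f ((c : K) - a)‖
            / (‖f (a : K)‖ * Real.sqrt (‖f ((a : K) * c)‖))
          * (1 / ‖f (z : K)‖ ^ 2) := by
  have hac' : f a * f c ≠ 0 := by
    rw [← map_mul]
    intro h
    rw [h, norm_zero] at hac
    norm_num at hac
  have hz' : f z ≠ 0 := by simpa using hz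
  have hsol' : f a * f z ^ 2 - f c * f x ^ 2 = f a - f c := by
    simpa using congrArg (fun u : 𝓞 K => f u) hsol
  simpa only [map_mul, map_sub] using
    RCLike.exists_sign_norm_mul_sub_div_le (f s) hac' hz' hsol' hw

/-- Approximation lemma: a solution of `az² − cx² = a − c` gives a good rational
approximation of `±(s/a)√(a/c)`. -/
theorem stmt_3 (K : Type*) [Field K] [NumberField K]
    (hdeg : Module.finrank ℚ K = 2)
    (f : K →+* ℂ) (him : ∃ w : K, (f w).im ≠ 0)
    (a c s : 𝓞 K) (hs : a * c + 1 = s ^ 2)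
    (hac : 16 ≤ ‖f ((a : K) * c)‖)
    (hca : ‖f (c : K)‖ > 4 * ‖f (a : K)‖)
    (x z : 𝓞 K) (hsol : a * z ^ 2 - c * x ^ 2 = a - c) (hz : z ≠ 0)
    (w : ℂ) (hw : w ^ 2 = f (a : K) / f (c : K)) :
    ∃ ε : ℂ, (ε = 1 ∨ ε = -1) ∧
      ‖ε * (f (s : K) / f (a : K)) * w
          - f (s : K) * f (x : K) / (f (a : K) * f (z : K))‖
        ≤ ‖f (s : K)‖ * ‖f ((c : K) - a)‖
            / (‖f (a : K)‖ * Real.sqrt (‖f ((a : K) * c)‖))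
          * (1 / ‖f (z : K)‖ ^ 2) :=
  stmt_3_general K f a c s hac x z hsol hz w hw
end

section
/- Let a, b, c be complex numbers with 2 ≤ |a|, |b| ≥ (3/2)|a|, |b| > 5, and |c| > |b|^{15}. Then 210·|b|^3·|b−a|^{3.8}·|a|^{0.8} < (|ac| − 1)^{0.8}. -/
/-!
Since `‖b - a‖ ≤ (5/3)‖b‖` and `‖a‖ ≤ (2/3)‖b‖`, the left-hand side is at most
`K ‖b‖ ^ 7.6` with `K = 210 (5/3) ^ 3.8 (2/3) ^ 0.8 < 5 ^ 4.4 < ‖b‖ ^ 4.4`, hence less than `‖b‖ ^ 12`.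
On the other side `‖a c‖ - 1 ≥ 2 ‖c‖ - 1 > ‖b‖ ^ 15`, so the right-hand side exceeds `‖b‖ ^ 12`.
-/

open Real

lemma rpow_pow_of_mul_eq {x p : ℝ} (hx : 0 ≤ x) {n k : ℕ} (h : p * n = k) :
    (x ^ p) ^ n = x ^ k := by
  rw [← rpow_natCast, ← rpow_mul hx, h, rpow_natCast]

/-- Checked on fifth powers, where all exponents become integers. -/
lemma gap_constant_lt : 210 * (5 / 3 : ℝ) ^ (3.8 : ℝ) * (2 / 3 : ℝ) ^ (0.8 : ℝ) < 5 ^ (4.4 : ℝ) := by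
  rw [← pow_lt_pow_iff_left₀ (by positivity) (by positivity) (by norm_num : (5 : ℕ) ≠ 0),
    mul_pow, mul_pow, rpow_pow_of_mul_eq (by norm_num) (k := 19) (by norm_num),
    rpow_pow_of_mul_eq (by norm_num) (k := 4) (by norm_num),
    rpow_pow_of_mul_eq (by norm_num) (k := 22) (by norm_num)]
  norm_num

lemma rpow_le_mul_rpow_of_le_mul {x y s p : ℝ} (hx : 0 ≤ x) (hs : 0 ≤ s) (hy : 0 ≤ y)
    (hp : 0 ≤ p) (h : x ≤ s * y) : x ^ p ≤ s ^ p * y ^ p :=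
  mul_rpow hs hy ▸ rpow_le_rpow hx h hp

lemma mul_rpow_lt_rpow_add {K x y p r : ℝ} (hK : K < x ^ r) (hx : 0 < x) (hxy : x ≤ y)
    (hr : 0 ≤ r) : K * y ^ p < y ^ (r + p) := by
  have hy : 0 < y := hx.trans_le hxy
  rw [rpow_add hy]
  exact mul_lt_mul_of_pos_right (hK.trans_le (rpow_le_rpow hx.le hxy hr)) (rpow_pos_of_pos hy p)

/-- Inequality (3) in the proof of the gap principle. -/
theorem stmt_9 (a b c : ℂ) (ha : 2 ≤ ‖a‖)
    (hba : ‖b‖ ≥ (3 / 2) * ‖a‖) (hb : 5 < ‖b‖)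
    (hc : ‖c‖ > ‖b‖ ^ (15 : ℝ)) :
    210 * ‖b‖ ^ (3 : ℝ) * ‖b - a‖ ^ (3.8 : ℝ)
        * ‖a‖ ^ (0.8 : ℝ)
      < (‖a * c‖ - 1) ^ (0.8 : ℝ) := by
  have hb0 : 0 < ‖b‖ := by linarith
  have hsub : ‖b - a‖ ≤ 5 / 3 * ‖b‖ := (norm_sub_le b a).trans (by linarith)
  have hab : ‖a‖ ≤ 2 / 3 * ‖b‖ := by linarith
  have hac : ‖b‖ ^ (15 : ℝ) < ‖a * c‖ - 1 := by
    have : 1 ≤ ‖b‖ ^ (15 : ℝ) := one_le_rpow (by linarith) (by norm_num)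
    rw [norm_mul]
    nlinarith [norm_nonneg c]
  calc 210 * ‖b‖ ^ (3 : ℝ) * ‖b - a‖ ^ (3.8 : ℝ) * ‖a‖ ^ (0.8 : ℝ)
      ≤ 210 * ‖b‖ ^ (3 : ℝ) * ((5 / 3) ^ (3.8 : ℝ) * ‖b‖ ^ (3.8 : ℝ))
          * ((2 / 3) ^ (0.8 : ℝ) * ‖b‖ ^ (0.8 : ℝ)) := by
        gcongr
        · exact rpow_le_mul_rpow_of_le_mul (norm_nonneg _) (by norm_num) hb0.le (by norm_num) hsub
        · exact rpow_le_mul_rpow_of_le_mul (norm_nonneg _) (by norm_num) hb0.le (by norm_num) hab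
    _ = 210 * (5 / 3) ^ (3.8 : ℝ) * (2 / 3) ^ (0.8 : ℝ) * ‖b‖ ^ (7.6 : ℝ) := by
        rw [show (7.6 : ℝ) = 3 + 3.8 + 0.8 by norm_num, rpow_add hb0, rpow_add hb0]
        ring
    _ < ‖b‖ ^ (4.4 + 7.6 : ℝ) := mul_rpow_lt_rpow_add gap_constant_lt (by norm_num) hb.le (by norm_num)
    _ = (‖b‖ ^ (15 : ℝ)) ^ (0.8 : ℝ) := by rw [← rpow_mul hb0.le]; norm_num
    _ < (‖a * c‖ - 1) ^ (0.8 : ℝ) := by gcongr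
end

section
/- Let {a, b, c, d} be a Diophantine quadruple in the ring of integers O_K of an imaginary quadratic field with 2 ≤ |a| ≤ |b| ≤ |c| ≤ |d| (complex absolute values). If ab + 1 = r^2, then it is impossible that simultaneously c = a + b − 2r and d = a + b + 2r. -/
/-!
Put `x = a - b`. Then `cd = x² - 4`, so `cd + 1 = w²` factors as `(x - w)(x + w) = 3`. The norm
`N z = |z|²` is a nonnegative multiplicative integer, so `N(x - w) N(x + w) = 9`, and the
parallelogram law together with `N x ≥ 1` and `N w ≥ 3` (from `|cd| ≥ 4`) leaves
`(N x, N w) ∈ {(2, 3), (1, 4)}`. Since `|x²| = N x`, `|x² - 3| = N w` and `|x² - 4| = |cd| ≥ 4`,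
the first case is impossible and the second forces `x² = -1`. Then `cd = -5` gives
`4 ≤ N a ≤ N b ≤ 5`, every element of `𝓞 K` lies in `ℤ[x]`, and the few remaining pairs `(a, b)`
make `N(ab + 1) = 29`, which is not the square `N(r)²`.
-/

open NumberField Complex

theorem Int.even_and_even_of_sq_add_sq_eq_four_mul {U V n : ℤ} (h : U ^ 2 + V ^ 2 = 4 * n) :
    Even U ∧ Even V := by
  rcases Int.even_or_odd U with ⟨k, rfl⟩ | ⟨k, rfl⟩ <;>
    rcases Int.even_or_odd V with ⟨l, rfl⟩ | ⟨l, rfl⟩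
  all_goals first | exact ⟨⟨k, rfl⟩, ⟨l, rfl⟩⟩ | (ring_nf at h; omega)

theorem Int.eq_two_three_or_eq_one_four_of_mul_eq_nine {P Q X W : ℤ} (hP : 0 ≤ P)
    (hPQ : P * Q = 9) (hsum : P + Q = 2 * (X + W)) (hX : 1 ≤ X) (hW : 3 ≤ W) :
    (X = 2 ∧ W = 3) ∨ (X = 1 ∧ W = 4) := by
  have hP9 : P ≤ 9 := Int.le_of_dvd (by norm_num) ⟨Q, hPQ.symm⟩
  interval_cases P <;> omega

/-- The right-hand side is the norm of `(p + (q + 1) i) (p + q i) + 1` in `ℤ[i]`. -/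
theorem Int.sq_ne_norm_gaussian_mul_add_one {p q n : ℤ} (h4 : 4 ≤ p ^ 2 + (q + 1) ^ 2)
    (hle : p ^ 2 + (q + 1) ^ 2 ≤ p ^ 2 + q ^ 2) (h5 : p ^ 2 + q ^ 2 ≤ 5) :
    n ^ 2 ≠ (p ^ 2 - q ^ 2 - q + 1) ^ 2 + (p * (2 * q + 1)) ^ 2 := by
  intro hn
  have hp : -2 ≤ p ∧ p ≤ 2 := by constructor <;> nlinarith
  have hq : -3 ≤ q ∧ q ≤ 2 := by constructor <;> nlinarith
  obtain ⟨hp1, hp2⟩ := hp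
  obtain ⟨hq1, hq2⟩ := hq
  interval_cases p <;> interval_cases q <;> norm_num at h4 <;> norm_num at hle <;>
    norm_num at h5 <;> norm_num at hn
  -- only `p = ±2, q = -1` survive, where the right-hand side is `29`
  all_goals
    have hn1 : -5 ≤ n := by nlinarith
    have hn2 : n ≤ 5 := by nlinarith
    interval_cases n <;> omega

namespace Complex

theorem eq_or_eq_neg_I_of_sq_eq_neg_one {j : ℂ} (hj : j ^ 2 = -1) : j = I ∨ j = -I :=
  sq_eq_sq_iff_eq_or_eq_neg.mp (hj.trans I_sq.symm)

theorem normSq_add_mul_of_sq_eq_neg_one {j : ℂ} (hj : j ^ 2 = -1) (m n : ℝ) :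
    normSq (m + n * j) = m ^ 2 + n ^ 2 := by
  rcases eq_or_eq_neg_I_of_sq_eq_neg_one hj with rfl | rfl <;> simp [normSq_apply] <;> ring

theorem normSq_eq_re_sq_add_re_mul_sq_of_sq_eq_neg_one {j : ℂ} (hj : j ^ 2 = -1) (ζ : ℂ) :
    normSq ζ = ζ.re ^ 2 + (ζ * j).re ^ 2 := by
  rcases eq_or_eq_neg_I_of_sq_eq_neg_one hj with rfl | rfl <;> simp [normSq_apply] <;> ring

theorem eq_re_sub_mul_of_sq_eq_neg_one {j : ℂ} (hj : j ^ 2 = -1) (ζ : ℂ) :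
    ζ = ζ.re - (ζ * j).re * j := by
  rcases eq_or_eq_neg_I_of_sq_eq_neg_one hj with rfl | rfl <;> apply Complex.ext <;> simp

theorem normSq_sub_four_lt {X : ℂ} (h0 : normSq X = 4) (h3 : normSq (X - 3) = 9) :
    normSq (X - 4) < 16 := by
  simp only [normSq_apply, sub_re, sub_im, re_ofNat, im_ofNat] at *
  nlinarith

theorem eq_neg_one_of_normSq_eq {X : ℂ} (h0 : normSq X = 1) (h3 : normSq (X - 3) = 16) :
    X = -1 := by
  simp only [normSq_apply, sub_re, sub_im, re_ofNat, im_ofNat] at h0 h3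
  have hre : X.re = -1 := by nlinarith
  have him : X.im = 0 := by nlinarith
  exact Complex.ext (by simp [hre]) (by simp [him])

theorem nine_le_normSq_sub_three {X : ℂ} (h : 16 ≤ normSq (X - 4)) : 9 ≤ normSq (X - 3) := by
  rw [← Complex.sq_norm] at *
  have htri : ‖X - 4‖ ≤ ‖X - 3‖ + 1 := by
    simpa [show X - 3 + -1 = X - 4 by ring] using norm_add_le (X - 3) (-1)
  have h4 : 4 ≤ ‖X - 4‖ := by nlinarith [norm_nonneg (X - 4)]
  nlinarith

end Complex

section

variable {R : Type*} [CommRing R] {F : R →+* ℂ}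

theorem two_mul_re_eq_of_normSq {N : R → ℤ} (hN : ∀ z, (N z : ℝ) = normSq (F z)) (z : R) :
    2 * (F z).re = N (z + 1) - N z - 1 := by
  rw [hN, hN, map_add, map_one, normSq_add]
  simp only [map_one, mul_one]
  ring

/-- If the values `|F z|²` are integers and `F x` is a square root of `-1`, then `F` takes values
in `ℤ[F x]`: twice the coordinates of `F z` are integers by polarization, and the sum of their
squares is `4 |F z|²`, which forces both to be even. -/
theorem exists_int_coords_of_sq_eq_neg_one {N : R → ℤ} (hN : ∀ z, (N z : ℝ) = normSq (F z))
    {x : R} (hx : F x ^ 2 = -1) (z : R) : ∃ m n : ℤ, F z = m + n * F x := by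
  obtain ⟨U, hU⟩ : ∃ U : ℤ, (U : ℝ) = 2 * (F z).re :=
    ⟨N (z + 1) - N z - 1, by push_cast; rw [two_mul_re_eq_of_normSq hN]⟩
  obtain ⟨V, hV⟩ : ∃ V : ℤ, (V : ℝ) = 2 * (F z * F x).re :=
    ⟨N (z * x + 1) - N (z * x) - 1, by push_cast; rw [← map_mul, two_mul_re_eq_of_normSq hN]⟩
  have hUV : U ^ 2 + V ^ 2 = 4 * N z := by
    have h : (U : ℝ) ^ 2 + V ^ 2 = 4 * N z := by
      rw [hU, hV, hN, normSq_eq_re_sq_add_re_mul_sq_of_sq_eq_neg_one hx]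
      ring
    exact_mod_cast h
  obtain ⟨⟨m, rfl⟩, ⟨n, rfl⟩⟩ := Int.even_and_even_of_sq_add_sq_eq_four_mul hUV
  refine ⟨m, -n, ?_⟩
  push_cast at hU hV ⊢
  rw [eq_re_sub_mul_of_sq_eq_neg_one hx (F z)]
  have hre : (F z).re = m := by linarith
  have hre' : (F z * F x).re = n := by linarith
  rw [hre, hre']
  push_cast
  ring

theorem le_of_norm_le_norm {N : R → ℤ} (hN : ∀ z, (N z : ℝ) = normSq (F z)) {y z : R}
    (h : ‖F y‖ ≤ ‖F z‖) : N y ≤ N z := by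
  have h' : (N y : ℝ) ≤ N z := by
    rw [hN, hN, ← Complex.sq_norm, ← Complex.sq_norm]
    gcongr
  exact_mod_cast h'

theorem four_le_of_two_le_norm {N : R → ℤ} (hN : ∀ z, (N z : ℝ) = normSq (F z)) {z : R}
    (h : 2 ≤ ‖F z‖) : 4 ≤ N z := by
  have h' : (4 : ℝ) ≤ N z := by
    rw [hN, ← Complex.sq_norm]
    nlinarith
  exact_mod_cast h'

theorem norm_eq_two_and_eq_three_or_of_sq_eq_sq_sub_three (hF : Function.Injective F)
    {N : R →* ℤ} (hN : ∀ z, (N z : ℝ) = normSq (F z)) {x w : R} (hx : x ≠ 0)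
    (hw : w ^ 2 = x ^ 2 - 3) (h16 : 16 ≤ normSq (F x ^ 2 - 4)) :
    (N x = 2 ∧ N w = 3) ∨ (N x = 1 ∧ N w = 4) := by
  have hN0 (z : R) : 0 ≤ N z := by exact_mod_cast (hN z).symm ▸ normSq_nonneg (F z)
  have hNx : 1 ≤ N x := by
    have h : (N x : ℝ) ≠ 0 := by rwa [hN, Ne, normSq_eq_zero, map_eq_zero_iff F hF]
    have h' : N x ≠ 0 := by exact_mod_cast h
    have := hN0 x
    omega
  have hNw : 3 ≤ N w := by
    have h : (9 : ℝ) ≤ N w ^ 2 := by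
      rw [hN, ← map_pow, ← map_pow, hw, map_sub, map_pow, map_ofNat]
      exact nine_le_normSq_sub_three h16
    have h' : (9 : ℤ) ≤ N w ^ 2 := by exact_mod_cast h
    nlinarith [hN0 w]
  have h9 : N (x - w) * N (x + w) = 9 := by
    rw [← map_mul, show (x - w) * (x + w) = 3 by linear_combination -hw]
    exact_mod_cast (by rw [hN, map_ofNat, normSq_ofNat]; norm_num : (N 3 : ℝ) = 9)
  have hpar : N (x - w) + N (x + w) = 2 * (N x + N w) := by
    have h : (N (x - w) : ℝ) + N (x + w) = 2 * (N x + N w) := by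
      rw [hN, hN, hN, hN, map_sub, map_add, normSq_sub, normSq_add]
      ring
    exact_mod_cast h
  exact Int.eq_two_three_or_eq_one_four_of_mul_eq_nine (hN0 _) h9 hpar hNx hNw

theorem false_of_sq_sub_eq_neg_one {N : R → ℤ} (hN : ∀ z, (N z : ℝ) = normSq (F z)) {a b r : R}
    (hx : F (a - b) ^ 2 = -1) (h4 : 4 ≤ N a) (hab : N a ≤ N b) (h5 : N b ≤ 5)
    (hr : a * b + 1 = r ^ 2) : False := by
  have hN_coords (z : R) (m n : ℤ) (h : F z = m + n * F (a - b)) : N z = m ^ 2 + n ^ 2 := by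
    have h' : (N z : ℝ) = m ^ 2 + n ^ 2 := by
      rw [hN, h, ← normSq_add_mul_of_sq_eq_neg_one hx]
      push_cast
      rfl
    exact_mod_cast h'
  obtain ⟨p, q, hb⟩ := exists_int_coords_of_sq_eq_neg_one hN hx b
  have ha : F a = p + (q + 1 : ℤ) * F (a - b) :=
    calc F a = F b + F (a - b) := by rw [← map_add, add_sub_cancel]
      _ = p + (q + 1 : ℤ) * F (a - b) := by rw [hb]; push_cast; ring
  have hr' : F r ^ 2 = (p ^ 2 - q ^ 2 - q + 1 : ℤ) + (p * (2 * q + 1) : ℤ) * F (a - b) := by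
    rw [← map_pow, ← hr, map_add, map_mul, map_one, ha, hb]
    push_cast
    linear_combination (q * (q + 1) : ℂ) * hx
  have hNr : N r ^ 2 = (p ^ 2 - q ^ 2 - q + 1) ^ 2 + (p * (2 * q + 1)) ^ 2 := by
    have h : (N r : ℝ) ^ 2 =
        ((p ^ 2 - q ^ 2 - q + 1 : ℤ) : ℝ) ^ 2 + ((p * (2 * q + 1) : ℤ) : ℝ) ^ 2 := by
      rw [hN, ← map_pow, hr', ← normSq_add_mul_of_sq_eq_neg_one hx]
      push_cast
      rfl
    exact_mod_cast h
  rw [hN_coords a _ _ ha] at h4 hab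
  rw [hN_coords b _ _ hb] at hab h5
  exact Int.sq_ne_norm_gaussian_mul_add_one h4 hab h5 hNr

theorem not_eq_add_sub_two_mul_and_eq_add_add_two_mul (hF : Function.Injective F) {N : R →* ℤ}
    (hN : ∀ z, (N z : ℝ) = normSq (F z)) {a b c d r w : R} (hab : a ≠ b)
    (h2a : 2 ≤ ‖F a‖) (hab' : ‖F a‖ ≤ ‖F b‖) (hbc' : ‖F b‖ ≤ ‖F c‖) (hcd' : ‖F c‖ ≤ ‖F d‖)
    (hr : a * b + 1 = r ^ 2) (hw : c * d + 1 = w ^ 2) :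
    ¬ (c = a + b - 2 * r ∧ d = a + b + 2 * r) := by
  rintro ⟨hc, hd⟩
  have hcd : c * d = (a - b) ^ 2 - 4 := by rw [hc, hd]; linear_combination 4 * hr
  have hcd_normSq : normSq (F (a - b) ^ 2 - 4) = N c * N d := by
    rw [← map_pow, ← map_ofNat F 4, ← map_sub, ← hcd, ← hN, map_mul, Int.cast_mul]
  have h4 := four_le_of_two_le_norm hN h2a
  have hNab := le_of_norm_le_norm hN hab'
  have hNbc := le_of_norm_le_norm hN hbc'
  have hNcd := le_of_norm_le_norm hN hcd'
  have h16 : (16 : ℝ) ≤ normSq (F (a - b) ^ 2 - 4) := by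
    rw [hcd_normSq]
    exact_mod_cast (by nlinarith : (16 : ℤ) ≤ N c * N d)
  have hw' : w ^ 2 = (a - b) ^ 2 - 3 := by linear_combination hcd - hw
  have hX0 (n : ℤ) (h : N (a - b) = n) : normSq (F (a - b) ^ 2) = n ^ 2 := by
    rw [map_pow, ← hN, h]
  have hX3 (n : ℤ) (h : N w = n) : normSq (F (a - b) ^ 2 - 3) = n ^ 2 := by
    rw [← map_pow, ← map_ofNat F 3, ← map_sub, ← hw', map_pow, map_pow, ← hN, h]
  rcases norm_eq_two_and_eq_three_or_of_sq_eq_sq_sub_three hF hN (sub_ne_zero.mpr hab) hw' h16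
    with ⟨hx, hw⟩ | ⟨hx, hw⟩
  · have := normSq_sub_four_lt (by rw [hX0 2 hx]; norm_num) (by rw [hX3 3 hw]; norm_num)
    linarith
  · have hsq : F (a - b) ^ 2 = -1 :=
      eq_neg_one_of_normSq_eq (by rw [hX0 1 hx]; norm_num) (by rw [hX3 4 hw]; norm_num)
    have h25 : N c * N d = 25 := by
      have h : (N c * N d : ℝ) = 25 := by rw [← hcd_normSq, hsq]; norm_num
      exact_mod_cast h
    exact false_of_sq_sub_eq_neg_one hN hsq h4 hNab (by nlinarith) hr

end

/-- In an imaginary quadratic field the two complex embeddings are `f` and its conjugate, so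
the norm of `z` is `f z * conj (f z)`. -/
theorem NumberField.norm_eq_normSq_of_finrank_eq_two {K : Type*} [Field K] [NumberField K]
    (hdeg : Module.finrank ℚ K = 2) (f : K →+* ℂ) (him : ∃ w : K, (f w).im ≠ 0) (z : K) :
    (Algebra.norm ℚ z : ℝ) = normSq (f z) := by
  classical
  obtain ⟨w, hw⟩ := him
  let σ : K →ₐ[ℚ] ℂ := RingHom.equivRatAlgHom K ℂ f
  let τ : K →ₐ[ℚ] ℂ := RingHom.equivRatAlgHom K ℂ ((starRingEnd ℂ).comp f)
  have hστ : σ ≠ τ := fun h => hw <| by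
    have h' := congrArg (fun φ : K →ₐ[ℚ] ℂ => (φ w).im) h
    change (f w).im = (starRingEnd ℂ (f w)).im at h'
    rw [conj_im] at h'
    linarith
  have huniv : (Finset.univ : Finset (K →ₐ[ℚ] ℂ)) = {σ, τ} :=
    (Finset.eq_of_subset_of_card_le (Finset.subset_univ _)
      (by rw [Finset.card_univ, AlgHom.card, hdeg, Finset.card_pair hστ])).symm
  have h := Algebra.norm_eq_prod_embeddings ℚ ℂ z
  rw [huniv, Finset.prod_pair hστ] at h
  have h' : ((Algebra.norm ℚ z : ℝ) : ℂ) = (normSq (f z) : ℂ) := by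
    rw [ofReal_ratCast, ← eq_ratCast (algebraMap ℚ ℂ), h, ← mul_conj]
    rfl
  exact_mod_cast h'

theorem stmt_12_general (K : Type*) [Field K] [NumberField K]
    (hdeg : Module.finrank ℚ K = 2)
    (f : K →+* ℂ) (him : ∃ w : K, (f w).im ≠ 0)
    (a b c d : 𝓞 K)
    (hab : a ≠ b)
    (hcd1 : ∃ w : 𝓞 K, c * d + 1 = w ^ 2)
    (h2a : 2 ≤ ‖f (a : K)‖)
    (hab' : ‖f (a : K)‖ ≤ ‖f (b : K)‖)
    (hbc' : ‖f (b : K)‖ ≤ ‖f (c : K)‖)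
    (hcd' : ‖f (c : K)‖ ≤ ‖f (d : K)‖)
    (r : 𝓞 K) (hr : a * b + 1 = r ^ 2) :
    ¬ (c = a + b - 2 * r ∧ d = a + b + 2 * r) := by
  obtain ⟨w, hw⟩ := hcd1
  refine not_eq_add_sub_two_mul_and_eq_add_add_two_mul (F := f.comp (algebraMap (𝓞 K) K))
    (f.injective.comp RingOfIntegers.coe_injective) (N := Algebra.norm ℤ) (fun z => ?_)
    hab h2a hab' hbc' hcd' hr hw
  rw [RingHom.comp_apply, ← norm_eq_normSq_of_finrank_eq_two hdeg f him, ← Algebra.coe_norm_int,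
    Rat.cast_intCast]

/-- In a Diophantine quadruple `{a, b, c, d}` in `𝓞 K` with `2 ≤ |a| ≤ |b| ≤ |c| ≤ |d|`
and `ab + 1 = r²`, it is impossible that both `c = a + b − 2r` and `d = a + b + 2r`. -/
theorem stmt_12 (K : Type*) [Field K] [NumberField K]
    (hdeg : Module.finrank ℚ K = 2)
    (f : K →+* ℂ) (him : ∃ w : K, (f w).im ≠ 0)
    (a b c d : 𝓞 K)
    (ha0 : a ≠ 0) (hb0 : b ≠ 0) (hc0 : c ≠ 0) (hd0 : d ≠ 0)
    (hab : a ≠ b) (hac : a ≠ c) (had : a ≠ d) (hbc : b ≠ c) (hbd : b ≠ d) (hcd : c ≠ d)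
    (hab1 : ∃ r : 𝓞 K, a * b + 1 = r ^ 2)
    (hac1 : ∃ s : 𝓞 K, a * c + 1 = s ^ 2)
    (had1 : ∃ u : 𝓞 K, a * d + 1 = u ^ 2)
    (hbc1 : ∃ t : 𝓞 K, b * c + 1 = t ^ 2)
    (hbd1 : ∃ v : 𝓞 K, b * d + 1 = v ^ 2)
    (hcd1 : ∃ w : 𝓞 K, c * d + 1 = w ^ 2)
    (h2a : 2 ≤ ‖f (a : K)‖)
    (hab' : ‖f (a : K)‖ ≤ ‖f (b : K)‖)
    (hbc' : ‖f (b : K)‖ ≤ ‖f (c : K)‖)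
    (hcd' : ‖f (c : K)‖ ≤ ‖f (d : K)‖)
    (r : 𝓞 K) (hr : a * b + 1 = r ^ 2) :
    ¬ (c = a + b - 2 * r ∧ d = a + b + 2 * r) :=
  stmt_12_general K hdeg f him a b c d hab hcd1 h2a hab' hbc' hcd' r hr
end

section
/- Let {a, b, c, d} be a Diophantine quadruple in O_K with 2 ≤ |a| ≤ |b| ≤ |c| ≤ |d| (complex absolute values), and suppose d ≠ a + b ± 2r where ab + 1 = r^2 (i.e., {a, b, d} is not a regular triple). Set c± = a + b + d + 2abd ± 2rxy, where ad+1 = x^2 and bd+1 = y^2. Then c+ ≠ 0 and c− ≠ 0. -/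
open NumberField

/-! With `ab + 1 = r²`, `ad + 1 = x²`, `bd + 1 = y²`, the product `c₊ c₋` equals
`(a + b + d + 2abd)² - 4(ab + 1)(ad + 1)(bd + 1)`, which factors as
`(d - (a + b + 2r)) (d - (a + b - 2r))`. In an integral domain `c₊` or `c₋` can therefore
only vanish when `{a, b, d}` is a regular triple. -/

theorem dioph_extension_mul_eq {R : Type*} [CommRing R] {a b d r x y : R}
    (hr : a * b + 1 = r ^ 2) (hx : a * d + 1 = x ^ 2) (hy : b * d + 1 = y ^ 2) :
    (a + b + d + 2 * a * b * d + 2 * r * x * y) * (a + b + d + 2 * a * b * d - 2 * r * x * y) =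
      (d - (a + b + 2 * r)) * (d - (a + b - 2 * r)) := by
  linear_combination (4 * x ^ 2 * y ^ 2 - 4) * hr + (4 * (a * b + 1) * y ^ 2) * hx +
    (4 * (a * b + 1) * (a * d + 1)) * hy

theorem dioph_extension_mul_ne_zero {R : Type*} [CommRing R] [IsDomain R] {a b d r x y : R}
    (hr : a * b + 1 = r ^ 2) (hx : a * d + 1 = x ^ 2) (hy : b * d + 1 = y ^ 2)
    (hreg1 : d ≠ a + b + 2 * r) (hreg2 : d ≠ a + b - 2 * r) :
    (a + b + d + 2 * a * b * d + 2 * r * x * y) * (a + b + d + 2 * a * b * d - 2 * r * x * y) ≠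
      0 := by
  rw [dioph_extension_mul_eq hr hx hy]
  exact mul_ne_zero (sub_ne_zero.mpr hreg1) (sub_ne_zero.mpr hreg2)

theorem stmt_15_general (K : Type*) [Field K] [NumberField K]
    (a b d : 𝓞 K)
    (r x y : 𝓞 K) (hr : a * b + 1 = r ^ 2)
    (hx : a * d + 1 = x ^ 2) (hy : b * d + 1 = y ^ 2)
    (hreg1 : d ≠ a + b + 2 * r) (hreg2 : d ≠ a + b - 2 * r) :
    a + b + d + 2 * a * b * d + 2 * r * x * y ≠ 0 ∧
      a + b + d + 2 * a * b * d - 2 * r * x * y ≠ 0 :=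
  mul_ne_zero_iff.mp (dioph_extension_mul_ne_zero hr hx hy hreg1 hreg2)

/-- If `{a, b, c, d}` is a Diophantine quadruple with `2 ≤ |a| ≤ |b| ≤ |c| ≤ |d|` and
`{a, b, d}` is not a regular triple, then `c₊ = a+b+d+2abd+2rxy ≠ 0` and
`c₋ = a+b+d+2abd−2rxy ≠ 0`. -/
theorem stmt_15 (K : Type*) [Field K] [NumberField K]
    (hdeg : Module.finrank ℚ K = 2)
    (f : K →+* ℂ) (him : ∃ w : K, (f w).im ≠ 0)
    (a b c d : 𝓞 K)
    (ha0 : a ≠ 0) (hb0 : b ≠ 0) (hc0 : c ≠ 0) (hd0 : d ≠ 0)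
    (hab : a ≠ b) (hac : a ≠ c) (had : a ≠ d) (hbc : b ≠ c) (hbd : b ≠ d) (hcd : c ≠ d)
    (hac1 : ∃ s : 𝓞 K, a * c + 1 = s ^ 2)
    (hbc1 : ∃ t : 𝓞 K, b * c + 1 = t ^ 2)
    (hcd1 : ∃ w : 𝓞 K, c * d + 1 = w ^ 2)
    (h2a : 2 ≤ ‖f (a : K)‖)
    (hab' : ‖f (a : K)‖ ≤ ‖f (b : K)‖)
    (hbc' : ‖f (b : K)‖ ≤ ‖f (c : K)‖)
    (hcd' : ‖f (c : K)‖ ≤ ‖f (d : K)‖)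
    (r x y : 𝓞 K) (hr : a * b + 1 = r ^ 2)
    (hx : a * d + 1 = x ^ 2) (hy : b * d + 1 = y ^ 2)
    (hreg1 : d ≠ a + b + 2 * r) (hreg2 : d ≠ a + b - 2 * r) :
    a + b + d + 2 * a * b * d + 2 * r * x * y ≠ 0 ∧
      a + b + d + 2 * a * b * d - 2 * r * x * y ≠ 0 :=
  stmt_15_general K a b d r x y hr hx hy hreg1 hreg2
end

section
/- If {a, b, c, d} is a Diophantine quadruple in the ring of integers O_K of an imaginary quadratic field with 2 ≤ |a| ≤ |b| ≤ |c| ≤ |d| (complex absolute values), then |d| ≥ |ab|/8 ≥ |a|^2/8. -/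
/-!
For a Diophantine triple `{x, y, z}` with `xy + 1 = p²`, `xz + 1 = q²`, `yz + 1 = t²`, put
`c± = x + y + z + 2xyz ± 2pqt`. Then `c₊ c₋ = (z - x - y)² - 4(xy + 1)`, which vanishes exactly
when the triple is regular. In an imaginary quadratic field every nonzero integer has absolute
value at least `1`, so for a non-regular triple `|c₊ c₋| ≥ max (|c₊|, |c₋|) ≥ 2|pqt| ≥ (5/4)|xyz|`,
while `|c₊ c₋| ≤ (|x| + |y| + |z|)² + 4 ≤ 10|z|²` when `2 ≤ |x|, |y| ≤ |z|`; hence `|xy| ≤ 8|z|`.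
Among `{a, b, d}`, `{a, b, c}` and `{b, c, d}` at least one triple is not regular (otherwise
`a = d`), and each of them yields `|ab| ≤ 8|d|`.
-/
open NumberField

namespace NumberField

theorem InfinitePlace.subsingleton_of_finrank_eq_two {K : Type*} [Field K] [NumberField K]
    (hdeg : Module.finrank ℚ K = 2) {f : K →+* ℂ} (hf : ¬ComplexEmbedding.IsReal f) :
    Subsingleton (InfinitePlace K) := by
  classical
  have hc : 0 < nrComplexPlaces K :=
    Fintype.card_pos_iff.mpr ⟨⟨mk f, isComplex_mk_iff.mpr hf⟩⟩
  have := card_add_two_mul_card_eq_rank K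
  rw [← Fintype.card_le_one_iff_subsingleton, card_eq_nrRealPlaces_add_nrComplexPlaces]
  omega

theorem one_le_norm_of_finrank_eq_two {K : Type*} [Field K] [NumberField K]
    (hdeg : Module.finrank ℚ K = 2) {f : K →+* ℂ} (hf : ¬ComplexEmbedding.IsReal f)
    {ξ : 𝓞 K} (hξ : ξ ≠ 0) : 1 ≤ ‖f ξ‖ :=
  have := InfinitePlace.subsingleton_of_finrank_eq_two hdeg hf
  InfinitePlace.one_le_of_lt_one (w := InfinitePlace.mk f) hξ
    fun _ hz ↦ (hz (Subsingleton.elim _ _)).elim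

end NumberField

section Regular

variable {R : Type*} [CommRing R]

def IsRegularTriple (x y z : R) : Prop := (z - x - y) ^ 2 = 4 * (x * y + 1)

theorem IsRegularTriple.eq_of_isRegularTriple_of_isRegularTriple [IsDomain R] [CharZero R]
    {a b c d : R} (habc : IsRegularTriple a b c) (habd : IsRegularTriple a b d)
    (hbcd : IsRegularTriple b c d) (hcd : c ≠ d) (hac : a ≠ c) : a = d := by
  unfold IsRegularTriple at habc habd hbcd
  have hd : d = 2 * (a + b) - c := by
    have : (d - c) * (d + c - 2 * (a + b)) = 0 := by linear_combination habd - habc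
    rcases mul_eq_zero.mp this with h | h
    · exact absurd (sub_eq_zero.mp h).symm hcd
    · linear_combination h
  subst hd
  have : (3 : R) * ((c - a) * (c - a - 2 * b)) = 0 := by linear_combination hbcd - habc
  rcases mul_eq_zero.mp this with h | h
  · exact absurd h (by norm_num)
  rcases mul_eq_zero.mp h with h | h
  · exact absurd (sub_eq_zero.mp h).symm hac
  · linear_combination h

theorem extension_mul_extension_eq {x y z p q t : R} (hp : x * y + 1 = p ^ 2)
    (hq : x * z + 1 = q ^ 2) (ht : y * z + 1 = t ^ 2) :
    (x + y + z + 2 * (x * y * z) + 2 * (p * q * t)) *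
        (x + y + z + 2 * (x * y * z) - 2 * (p * q * t)) =
      (z - x - y) ^ 2 - 4 * (x * y + 1) := by
  linear_combination 4 * q ^ 2 * t ^ 2 * hp + 4 * (x * y + 1) * t ^ 2 * hq
    + 4 * (x * y + 1) * (x * z + 1) * ht

end Regular

section Norms

variable {𝕜 : Type*} [RCLike 𝕜] {x y z p q t : 𝕜}

theorem three_div_four_mul_le_norm_sq (hp : x * y + 1 = p ^ 2) (hxy : 4 ≤ ‖x‖ * ‖y‖) :
    3 / 4 * (‖x‖ * ‖y‖) ≤ ‖p‖ ^ 2 := by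
  have := norm_le_add_norm_add (x * y) 1
  rw [hp, norm_mul, norm_pow, norm_one] at this
  linarith

theorem five_div_eight_mul_le_norm_mul_mul (hp : x * y + 1 = p ^ 2) (hq : x * z + 1 = q ^ 2)
    (ht : y * z + 1 = t ^ 2) (hx : 2 ≤ ‖x‖) (hy : 2 ≤ ‖y‖) (hz : 2 ≤ ‖z‖) :
    5 / 8 * (‖x‖ * ‖y‖ * ‖z‖) ≤ ‖p * q * t‖ := by
  have hp' := three_div_four_mul_le_norm_sq hp (by nlinarith)
  have hq' := three_div_four_mul_le_norm_sq hq (by nlinarith)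
  have ht' := three_div_four_mul_le_norm_sq ht (by nlinarith)
  refine (pow_le_pow_iff_left₀ (by positivity) (norm_nonneg _) two_ne_zero).mp ?_
  calc (5 / 8 * (‖x‖ * ‖y‖ * ‖z‖)) ^ 2
      ≤ 3 / 4 * (‖x‖ * ‖y‖) * (3 / 4 * (‖x‖ * ‖z‖)) * (3 / 4 * (‖y‖ * ‖z‖)) := by
        ring_nf; gcongr; norm_num
    _ ≤ ‖p‖ ^ 2 * ‖q‖ ^ 2 * ‖t‖ ^ 2 := by gcongr
    _ = ‖p * q * t‖ ^ 2 := by rw [norm_mul, norm_mul]; ring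

theorem norm_sub_sub_sq_sub_four_mul_le :
    ‖(z - x - y) ^ 2 - 4 * (x * y + 1)‖ ≤ (‖x‖ + ‖y‖ + ‖z‖) ^ 2 + 4 := by
  have hxy : ‖x - y‖ ≤ ‖x‖ + ‖y‖ := norm_sub_le x y
  have hz : ‖z - 2 * (x + y)‖ ≤ ‖z‖ + 2 * (‖x‖ + ‖y‖) := by
    refine (norm_sub_le _ _).trans ?_
    rw [norm_mul, RCLike.norm_two]
    gcongr
    exact norm_add_le x y
  calc ‖(z - x - y) ^ 2 - 4 * (x * y + 1)‖ = ‖(x - y) ^ 2 + z * (z - 2 * (x + y)) - 4‖ := by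
        ring_nf
    _ ≤ ‖x - y‖ ^ 2 + ‖z‖ * ‖z - 2 * (x + y)‖ + 4 := by
        refine (norm_sub_le _ _).trans ?_
        rw [RCLike.norm_ofNat, ← norm_pow, ← norm_mul]
        gcongr
        exact norm_add_le _ _
    _ ≤ (‖x‖ + ‖y‖) ^ 2 + ‖z‖ * (‖z‖ + 2 * (‖x‖ + ‖y‖)) + 4 := by gcongr
    _ = (‖x‖ + ‖y‖ + ‖z‖) ^ 2 + 4 := by ring

theorem norm_mul_le_eight_norm_of_one_le_norm_extension (hp : x * y + 1 = p ^ 2)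
    (hq : x * z + 1 = q ^ 2) (ht : y * z + 1 = t ^ 2) (hx : 2 ≤ ‖x‖) (hy : 2 ≤ ‖y‖)
    (hxz : ‖x‖ ≤ ‖z‖) (hyz : ‖y‖ ≤ ‖z‖)
    (hplus : 1 ≤ ‖x + y + z + 2 * (x * y * z) + 2 * (p * q * t)‖)
    (hminus : 1 ≤ ‖x + y + z + 2 * (x * y * z) - 2 * (p * q * t)‖) :
    ‖x‖ * ‖y‖ ≤ 8 * ‖z‖ := by
  set cplus := x + y + z + 2 * (x * y * z) + 2 * (p * q * t)
  set cminus := x + y + z + 2 * (x * y * z) - 2 * (p * q * t)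
  have hz : 2 ≤ ‖z‖ := hx.trans hxz
  have hprod : ‖cplus‖ * ‖cminus‖ ≤ 10 * ‖z‖ ^ 2 := by
    rw [← norm_mul, extension_mul_extension_eq hp hq ht]
    refine norm_sub_sub_sq_sub_four_mul_le.trans ?_
    nlinarith
  have hsum : 4 * ‖p * q * t‖ ≤ ‖cplus‖ + ‖cminus‖ := by
    calc 4 * ‖p * q * t‖ = ‖cplus - cminus‖ := by
          rw [show cplus - cminus = 4 * (p * q * t) by ring, norm_mul 4, RCLike.norm_ofNat]
      _ ≤ ‖cplus‖ + ‖cminus‖ := norm_sub_le _ _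
  have hpqt := five_div_eight_mul_le_norm_mul_mul hp hq ht hx hy hz
  have hsum_le : ‖cplus‖ + ‖cminus‖ ≤ 2 * (‖cplus‖ * ‖cminus‖) := by nlinarith
  have : 5 / 2 * (‖x‖ * ‖y‖ * ‖z‖) ≤ 20 * ‖z‖ ^ 2 := by linarith
  nlinarith

theorem norm_map_mul_le_eight_norm_map_of_not_isRegularTriple {R : Type*} [CommRing R]
    (g : R →+* 𝕜) (hg : ∀ ξ : R, ξ ≠ 0 → 1 ≤ ‖g ξ‖) {x y z p q t : R}
    (hp : x * y + 1 = p ^ 2) (hq : x * z + 1 = q ^ 2) (ht : y * z + 1 = t ^ 2)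
    (hx : 2 ≤ ‖g x‖) (hy : 2 ≤ ‖g y‖) (hxz : ‖g x‖ ≤ ‖g z‖) (hyz : ‖g y‖ ≤ ‖g z‖)
    (hreg : ¬IsRegularTriple x y z) :
    ‖g x‖ * ‖g y‖ ≤ 8 * ‖g z‖ := by
  have hne : (x + y + z + 2 * (x * y * z) + 2 * (p * q * t)) *
      (x + y + z + 2 * (x * y * z) - 2 * (p * q * t)) ≠ 0 := by
    rw [extension_mul_extension_eq hp hq ht]
    exact sub_ne_zero.mpr hreg
  refine norm_mul_le_eight_norm_of_one_le_norm_extension (p := g p) (q := g q) (t := g t)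
    ?_ ?_ ?_ hx hy hxz hyz ?_ ?_
  · simpa using congrArg g hp
  · simpa using congrArg g hq
  · simpa using congrArg g ht
  · simpa [map_ofNat g 2] using hg _ (left_ne_zero_of_mul hne)
  · simpa [map_ofNat g 2] using hg _ (right_ne_zero_of_mul hne)

end Norms

theorem stmt_17_general (K : Type*) [Field K] [NumberField K]
    (hdeg : Module.finrank ℚ K = 2)
    (f : K →+* ℂ) (him : ∃ w : K, (f w).im ≠ 0)
    (a b c d : 𝓞 K)
    (hac : a ≠ c) (had : a ≠ d) (hcd : c ≠ d)
    (hab1 : ∃ r : 𝓞 K, a * b + 1 = r ^ 2)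
    (hac1 : ∃ s : 𝓞 K, a * c + 1 = s ^ 2)
    (had1 : ∃ u : 𝓞 K, a * d + 1 = u ^ 2)
    (hbc1 : ∃ t : 𝓞 K, b * c + 1 = t ^ 2)
    (hbd1 : ∃ v : 𝓞 K, b * d + 1 = v ^ 2)
    (hcd1 : ∃ w : 𝓞 K, c * d + 1 = w ^ 2)
    (h2a : 2 ≤ ‖f (a : K)‖)
    (hab' : ‖f (a : K)‖ ≤ ‖f (b : K)‖)
    (hbc' : ‖f (b : K)‖ ≤ ‖f (c : K)‖)
    (hcd' : ‖f (c : K)‖ ≤ ‖f (d : K)‖) :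
    ‖f (d : K)‖ ≥ ‖f ((a : K) * b)‖ / 8 ∧
      ‖f ((a : K) * b)‖ / 8 ≥ ‖f (a : K)‖ ^ 2 / 8 := by
  obtain ⟨r, hr⟩ := hab1
  obtain ⟨s, hs⟩ := hac1
  obtain ⟨u, hu⟩ := had1
  obtain ⟨t, ht⟩ := hbc1
  obtain ⟨v, hv⟩ := hbd1
  obtain ⟨w, hw⟩ := hcd1
  have hf : ¬ComplexEmbedding.IsReal f := fun hreal ↦ by
    obtain ⟨w₀, hw₀⟩ := him
    exact hw₀ <| Complex.conj_eq_iff_im.mp <|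
      RingHom.congr_fun (ComplexEmbedding.isReal_iff.mp hreal) w₀
  let g : 𝓞 K →+* ℂ := f.comp (algebraMap (𝓞 K) K)
  have hg : ∀ ξ : 𝓞 K, ξ ≠ 0 → 1 ≤ ‖g ξ‖ := fun _ ↦ one_le_norm_of_finrank_eq_two hdeg hf
  have h2b := h2a.trans hab'
  have h2c := h2b.trans hbc'
  have hab : ‖f a‖ * ‖f b‖ ≤ 8 * ‖f d‖ := by
    by_cases habd : IsRegularTriple a b d
    · by_cases habc : IsRegularTriple a b c
      · have hbcd : ¬IsRegularTriple b c d := fun hbcd ↦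
          had (habc.eq_of_isRegularTriple_of_isRegularTriple habd hbcd hcd hac)
        have : ‖f b‖ * ‖f c‖ ≤ 8 * ‖f d‖ :=
          norm_map_mul_le_eight_norm_map_of_not_isRegularTriple g hg ht hv hw h2b h2c
            (hbc'.trans hcd') hcd' hbcd
        nlinarith
      · have : ‖f a‖ * ‖f b‖ ≤ 8 * ‖f c‖ :=
          norm_map_mul_le_eight_norm_map_of_not_isRegularTriple g hg hr hs ht h2a h2b
            (hab'.trans hbc') hbc' habc
        nlinarith
    · exact norm_map_mul_le_eight_norm_map_of_not_isRegularTriple g hg hr hu hv h2a h2b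
        (hab'.trans (hbc'.trans hcd')) (hbc'.trans hcd') habd
  rw [map_mul, norm_mul]
  constructor <;> nlinarith

/-- If `{a, b, c, d}` is a Diophantine quadruple in `𝓞 K` with `2 ≤ |a| ≤ |b| ≤ |c| ≤ |d|`,
then `|d| ≥ |ab|/8 ≥ |a|²/8`. -/
theorem stmt_17 (K : Type*) [Field K] [NumberField K]
    (hdeg : Module.finrank ℚ K = 2)
    (f : K →+* ℂ) (him : ∃ w : K, (f w).im ≠ 0)
    (a b c d : 𝓞 K)
    (ha0 : a ≠ 0) (hb0 : b ≠ 0) (hc0 : c ≠ 0) (hd0 : d ≠ 0)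
    (hab : a ≠ b) (hac : a ≠ c) (had : a ≠ d) (hbc : b ≠ c) (hbd : b ≠ d) (hcd : c ≠ d)
    (hab1 : ∃ r : 𝓞 K, a * b + 1 = r ^ 2)
    (hac1 : ∃ s : 𝓞 K, a * c + 1 = s ^ 2)
    (had1 : ∃ u : 𝓞 K, a * d + 1 = u ^ 2)
    (hbc1 : ∃ t : 𝓞 K, b * c + 1 = t ^ 2)
    (hbd1 : ∃ v : 𝓞 K, b * d + 1 = v ^ 2)
    (hcd1 : ∃ w : 𝓞 K, c * d + 1 = w ^ 2)
    (h2a : 2 ≤ ‖f (a : K)‖)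
    (hab' : ‖f (a : K)‖ ≤ ‖f (b : K)‖)
    (hbc' : ‖f (b : K)‖ ≤ ‖f (c : K)‖)
    (hcd' : ‖f (c : K)‖ ≤ ‖f (d : K)‖) :
    ‖f (d : K)‖ ≥ ‖f ((a : K) * b)‖ / 8 ∧
      ‖f ((a : K) * b)‖ / 8 ≥ ‖f (a : K)‖ ^ 2 / 8 :=
  stmt_17_general K hdeg f him a b c d hac had hcd hab1 hac1 had1 hbc1 hbd1 hcd1 h2a hab' hbc' hcd'
end

section
/- Let a, b, d be complex numbers with 2 ≤ |a| ≤ |b| ≤ |d| and |d| ≥ 2, and let c+, c− be complex numbers with c+ + c− = 2(a + b + d + 2abd) and c+·c− = a^2 + b^2 + d^2 − 2ab − 2ad − 2bd − 4. Then |c+ c−| ≤ 10|d|^2, and if |c+| ≥ |c−| then |c+| ≥ (5/4)·|abd|. -/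
/-- Bounds on `c₊` and `c₋` used in the lower-bound lemma. -/
theorem stmt_18 (a b d cp cm : ℂ) (ha : 2 ≤ ‖a‖)
    (hab : ‖a‖ ≤ ‖b‖) (hbd : ‖b‖ ≤ ‖d‖)
    (hd : 2 ≤ ‖d‖)
    (hsum : cp + cm = 2 * (a + b + d + 2 * a * b * d))
    (hprod : cp * cm
      = a ^ 2 + b ^ 2 + d ^ 2 - 2 * a * b - 2 * a * d - 2 * b * d - 4) :
    ‖cp * cm‖ ≤ 10 * ‖d‖ ^ 2 ∧
      (‖cm‖ ≤ ‖cp‖ →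
        ‖cp‖ ≥ (5 / 4) * ‖a * b * d‖) := by
  have habs : ∀ x y : ℂ, ‖x - y‖ ≤ ‖x‖ + ‖y‖ := fun x y => by
    simpa [sub_eq_add_neg] using norm_add_le x (-y)
  have had : ‖a‖ ≤ ‖d‖ := hab.trans hbd
  have hA : 0 ≤ ‖a‖ := norm_nonneg a
  constructor
  · rw [hprod]
    have T : ‖a ^ 2 + b ^ 2 + d ^ 2 - 2 * a * b - 2 * a * d - 2 * b * d - 4‖
        ≤ ‖a ^ 2‖ + ‖b ^ 2‖ + ‖d ^ 2‖
          + ‖2 * a * b‖ + ‖2 * a * d‖ + ‖2 * b * d‖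
          + ‖(4:ℂ)‖ := by
      calc ‖a ^ 2 + b ^ 2 + d ^ 2 - 2 * a * b - 2 * a * d - 2 * b * d - 4‖
          ≤ ‖a ^ 2 + b ^ 2 + d ^ 2 - 2 * a * b - 2 * a * d - 2 * b * d‖
            + ‖(4:ℂ)‖ := habs _ _
        _ ≤ ‖a ^ 2 + b ^ 2 + d ^ 2 - 2 * a * b - 2 * a * d‖
            + ‖2 * b * d‖ + ‖(4:ℂ)‖ := by
              gcongr; exact habs _ _
        _ ≤ ‖a ^ 2 + b ^ 2 + d ^ 2 - 2 * a * b‖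
            + ‖2 * a * d‖ + ‖2 * b * d‖ + ‖(4:ℂ)‖ := by
              gcongr; exact habs _ _
        _ ≤ ‖a ^ 2 + b ^ 2 + d ^ 2‖
            + ‖2 * a * b‖ + ‖2 * a * d‖ + ‖2 * b * d‖
            + ‖(4:ℂ)‖ := by gcongr; exact habs _ _
        _ ≤ ‖a ^ 2 + b ^ 2‖ + ‖d ^ 2‖
            + ‖2 * a * b‖ + ‖2 * a * d‖ + ‖2 * b * d‖
            + ‖(4:ℂ)‖ := by gcongr; exact norm_add_le _ _
        _ ≤ ‖a ^ 2‖ + ‖b ^ 2‖ + ‖d ^ 2‖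
            + ‖2 * a * b‖ + ‖2 * a * d‖ + ‖2 * b * d‖
            + ‖(4:ℂ)‖ := by gcongr; exact norm_add_le _ _
    simp only [norm_pow, norm_mul, Complex.norm_two, Complex.norm_ofNat] at T
    nlinarith [norm_nonneg d, sq_nonneg (‖d‖)]
  · intro hcm
    have hab4 : 4 ≤ ‖a‖ * ‖b‖ := by nlinarith
    have habd : ‖a + b + d‖ ≤ 3 * ‖d‖ := by
      calc ‖a + b + d‖ ≤ ‖a + b‖ + ‖d‖ :=
            norm_add_le _ _
        _ ≤ ‖a‖ + ‖b‖ + ‖d‖ := by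
            gcongr; exact norm_add_le _ _
        _ ≤ 3 * ‖d‖ := by linarith
    have key := habs (a + b + d + 2 * a * b * d) (a + b + d)
    have e : a + b + d + 2 * a * b * d - (a + b + d) = 2 * a * b * d := by ring
    rw [e] at key
    have h2abd : ‖2 * a * b * d‖ = 2 * ‖a * b * d‖ := by
      have : (2 : ℂ) * a * b * d = 2 * (a * b * d) := by ring
      rw [this, norm_mul, Complex.norm_two]
    have hdle : 3 * ‖d‖ ≤ 3 / 4 * ‖a * b * d‖ := by
      rw [norm_mul, norm_mul]
      nlinarith [norm_nonneg d]
    have hsabs : ‖cp + cm‖ = 2 * ‖a + b + d + 2 * a * b * d‖ := by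
      rw [hsum, norm_mul, Complex.norm_two]
    have htri : ‖cp + cm‖ ≤ ‖cp‖ + ‖cm‖ :=
      norm_add_le _ _
    rw [hsabs] at htri
    nlinarith
end
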